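/- arXiv:2509.01281 — 2 statements merged into one kernel-verified Lean document; each statement's English description precedes it below -/
import Mathlib

section
/- For a density operator ρ and density operator σ with tr(ρσ) = 0, the trace distance satisfies ‖ρ − σ‖₁ = 2; conversely, if ‖ρ − σ‖₁ = 2 then tr(ρσ) = 0. Consequently, μ_{ρ,M}(1) = (1/2) · min{ ‖ρ − σ‖_M : σ a density operator with tr(ρσ) = 0 }. -/
/-!
For positive `ρ, σ`, `tr (ρσ) = tr (√ρ σ √ρ)` vanishes only if `ρσ = 0`. If `ρσ = 0`, then
`ρ - σ` is a difference of nonnegative operators with zero product, so these are its positive and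
negative parts and `|ρ - σ| = ρ + σ`, whence `‖ρ - σ‖₁ = 2`.
Conversely, let `P` be the spectral projection of `Δ = ρ - σ` onto its positive eigenspaces. Then
`|Δ| = PΔ - (1 - P)Δ`, so `tr |Δ| = tr ρ + tr σ - 2 (tr (Pσ) + tr ((1 - P)ρ))`. The bracket is
nonnegative, and it vanishes only if `Pσ = 0` and `ρ(1 - P) = 0`, that is, only if `ρσ = 0`.
Since `‖ρ - σ‖₁ ≤ 2` always holds, the constraint `‖ρ - σ‖₁ ≥ 2` in `μ(1)` selects exactly the
`σ` orthogonal to `ρ`.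
-/

open Matrix
open scoped ComplexOrder

namespace QSVQDH

variable {d : ℕ}

/-- Schatten 1-norm (trace norm). -/
noncomputable def trNorm (A : Matrix (Fin d) (Fin d) ℂ) : ℝ :=
  ((Matrix.posSemidef_conjTranspose_mul_self A).1.eigenvectorUnitary.1 *
    diagonal (((↑) : ℝ → ℂ) ∘ (√·) ∘ (Matrix.posSemidef_conjTranspose_mul_self A).1.eigenvalues) *
    (star (Matrix.posSemidef_conjTranspose_mul_self A).1.eigenvectorUnitary :
      Matrix (Fin d) (Fin d) ℂ)).trace.re

/-- Schatten 2-norm (Hilbert–Schmidt norm). -/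
noncomputable def hsNorm (A : Matrix (Fin d) (Fin d) ℂ) : ℝ :=
  Real.sqrt ((Aᴴ * A).trace.re)

/-- Operator norm. -/
noncomputable def opNorm (A : Matrix (Fin d) (Fin d) ℂ) : ℝ :=
  ‖Matrix.toEuclideanCLM (𝕜 := ℂ) A‖

/-- Density operator: positive semidefinite with unit trace. -/
def IsDensity (ρ : Matrix (Fin d) (Fin d) ℂ) : Prop := ρ.PosSemidef ∧ ρ.trace = 1

/-- POVM element: 0 ≤ M ≤ I. -/
def IsPOVMElem (M : Matrix (Fin d) (Fin d) ℂ) : Prop := M.PosSemidef ∧ (1 - M).PosSemidef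

/-- A measurement class of binary effects: contains 0, consists of POVM elements,
is convex, and is closed under M ↦ I − M. -/
def IsMClass (Mset : Set (Matrix (Fin d) (Fin d) ℂ)) : Prop :=
  0 ∈ Mset ∧ (∀ M ∈ Mset, IsPOVMElem M) ∧ Convex ℝ Mset ∧ (∀ M ∈ Mset, 1 - M ∈ Mset)

/-- The M-seminorm ‖Δ‖_M = sup_{M ∈ Mset} (2 tr(MΔ) − tr Δ). -/
noncomputable def Mnorm (Mset : Set (Matrix (Fin d) (Fin d) ℂ))
    (Δ : Matrix (Fin d) (Fin d) ℂ) : ℝ :=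
  sSup ((fun M => 2 * (M * Δ).trace.re - Δ.trace.re) '' Mset)

/-- The ε-distinguishability ratio μ_{ρ,M}(ε). -/
noncomputable def mu (Mset : Set (Matrix (Fin d) (Fin d) ℂ))
    (ρ : Matrix (Fin d) (Fin d) ℂ) (ε : ℝ) : ℝ :=
  (1 / (2 * ε)) *
    sInf ((fun σ => Mnorm Mset (ρ - σ)) '' {σ | IsDensity σ ∧ 2 * ε ≤ trNorm (ρ - σ)})

/-- The ε-visibility γ_{V,M}(ε), where the subspace V is given by its
orthogonal projector P. -/
noncomputable def gamma (Mset : Set (Matrix (Fin d) (Fin d) ℂ))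
    (P : Matrix (Fin d) (Fin d) ℂ) (ε : ℝ) : ℝ :=
  (1 / ε) * sSup ((fun Ω =>
      sInf ((fun p : Matrix (Fin d) (Fin d) ℂ × Matrix (Fin d) (Fin d) ℂ =>
          (Ω * (p.1 - p.2)).trace.re) ''
        {p | IsDensity p.1 ∧ P * p.1 = p.1 ∧ IsDensity p.2 ∧ (p.2 * P).trace.re ≤ 1 - ε}))
    '' Mset)

/-- The ε-visibility in its minimax (minimum) form. -/
noncomputable def gammaMin (Mset : Set (Matrix (Fin d) (Fin d) ℂ))
    (P : Matrix (Fin d) (Fin d) ℂ) (ε : ℝ) : ℝ :=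
  sInf ((fun p : Matrix (Fin d) (Fin d) ℂ × Matrix (Fin d) (Fin d) ℂ =>
      (1 / (2 * ε)) * Mnorm Mset (p.1 - p.2)) ''
    {p | IsDensity p.1 ∧ P * p.1 = p.1 ∧ IsDensity p.2 ∧ (p.2 * P).trace.re ≤ 1 - ε})

/-- μ_{ρ,M}(1), defined through perfectly distinguishable (orthogonal) counterparts. -/
noncomputable def muone (Mset : Set (Matrix (Fin d) (Fin d) ℂ))
    (ρ : Matrix (Fin d) (Fin d) ℂ) : ℝ :=
  (1 / 2) * sInf ((fun σ => Mnorm Mset (ρ - σ)) '' {σ | IsDensity σ ∧ (ρ * σ).trace = 0})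

/-- The distinguishability ratio μ̂_{ρ,M}. -/
noncomputable def muhat (Mset : Set (Matrix (Fin d) (Fin d) ℂ))
    (ρ : Matrix (Fin d) (Fin d) ℂ) : ℝ :=
  sInf ((fun σ => Mnorm Mset (ρ - σ) / trNorm (ρ - σ)) '' {σ | IsDensity σ ∧ σ ≠ ρ})
end QSVQDH

open scoped MatrixOrder

namespace Matrix

variable {𝕜 n : Type*} [RCLike 𝕜] [Fintype n] [DecidableEq n] {A B : Matrix n n 𝕜}

lemma conjTranspose_sqrt (A : Matrix n n 𝕜) : (CFC.sqrt A)ᴴ = CFC.sqrt A :=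
  (CFC.sqrt_nonneg A).isSelfAdjoint.star_eq

namespace PosSemidef

lemma trace_mul_eq_trace_sqrt_mul_mul_sqrt (hA : A.PosSemidef) (B : Matrix n n 𝕜) :
    (A * B).trace = (CFC.sqrt A * B * CFC.sqrt A).trace := by
  rw [← CFC.sqrt_mul_sqrt_self A hA.nonneg, mul_assoc, trace_mul_comm, CFC.sqrt_mul_sqrt_self A]

lemma sqrt_mul_mul_sqrt (hB : B.PosSemidef) (A : Matrix n n 𝕜) :
    (CFC.sqrt A * B * CFC.sqrt A).PosSemidef := by
  simpa [conjTranspose_sqrt] using hB.conjTranspose_mul_mul_same (CFC.sqrt A)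

lemma trace_mul_nonneg (hA : A.PosSemidef) (hB : B.PosSemidef) : 0 ≤ (A * B).trace := by
  rw [hA.trace_mul_eq_trace_sqrt_mul_mul_sqrt]
  exact (hB.sqrt_mul_mul_sqrt A).trace_nonneg

lemma trace_mul_eq_zero_iff (hA : A.PosSemidef) (hB : B.PosSemidef) :
    (A * B).trace = 0 ↔ A * B = 0 := by
  refine ⟨fun h => ?_, fun h => by rw [h, trace_zero]⟩
  have hSBS : CFC.sqrt A * B * CFC.sqrt A = 0 := by
    rwa [← (hB.sqrt_mul_mul_sqrt A).trace_eq_zero_iff, ← hA.trace_mul_eq_trace_sqrt_mul_mul_sqrt]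
  have hTS : CFC.sqrt B * CFC.sqrt A = 0 := by
    rw [← conjTranspose_mul_self_eq_zero, conjTranspose_mul, conjTranspose_sqrt,
      conjTranspose_sqrt]
    calc _ = CFC.sqrt A * (CFC.sqrt B * CFC.sqrt B) * CFC.sqrt A := by simp only [mul_assoc]
      _ = 0 := by rw [CFC.sqrt_mul_sqrt_self B hB.nonneg, hSBS]
  have hBA : B * A = 0 := by
    rw [← CFC.sqrt_mul_sqrt_self A hA.nonneg, ← CFC.sqrt_mul_sqrt_self B hB.nonneg, mul_assoc,
      ← mul_assoc _ (CFC.sqrt A), hTS, zero_mul, mul_zero]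
  rw [← hA.1.eq, ← hB.1.eq, ← conjTranspose_mul, hBA, conjTranspose_zero]

end PosSemidef

lemma IsHermitian.exists_isStarProjection_abs_eq {Δ : Matrix n n 𝕜} (hΔ : Δ.IsHermitian) :
    ∃ P : Matrix n n 𝕜, IsStarProjection P ∧ CFC.abs Δ = P * Δ - (1 - P) * Δ := by
  have hΔ' : IsSelfAdjoint Δ := hΔ
  have hc (f : ℝ → ℝ) : ContinuousOn f (spectrum ℝ Δ) := finite_real_spectrum.continuousOn f
  let s : ℝ → ℝ := fun x => if 0 < x then 1 else 0
  refine ⟨cfc s Δ, ⟨?_, cfc_predicate s Δ⟩, ?_⟩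
  · rw [IsIdempotentElem, ← cfc_mul s s Δ (hc _) (hc _)]
    exact cfc_congr fun x _ => by simp only [s]; split_ifs <;> norm_num
  calc CFC.abs Δ = cfc (fun x => s x * id x - (1 - s x) * id x) Δ := by
        rw [CFC.abs_eq_cfc_norm Δ]
        refine cfc_congr fun x _ => ?_
        simp only [s, id, Real.norm_eq_abs]
        split_ifs with hx
        · simp [abs_of_pos hx]
        · simp [abs_of_nonpos (not_lt.mp hx)]
    _ = cfc s Δ * Δ - (1 - cfc s Δ) * Δ := by
        rw [cfc_sub (fun x => s x * id x) _ Δ (hc _) (hc _), cfc_mul s id Δ (hc _) (hc _),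
          cfc_mul (fun x => 1 - s x) id Δ (hc _) (hc _), cfc_sub (fun _ => 1) s Δ (hc _) (hc _),
          cfc_const_one ℝ Δ, cfc_id ℝ Δ]

lemma IsHermitian.exists_trace_abs_sub_add_eq (hA : A.IsHermitian) (hB : B.IsHermitian) :
    ∃ P : Matrix n n 𝕜, P.PosSemidef ∧ (1 - P).PosSemidef ∧
      (CFC.abs (A - B)).trace + 2 * ((P * B).trace + ((1 - P) * A).trace) = A.trace + B.trace := by
  obtain ⟨P, hP, habs⟩ := (hA.sub hB).exists_isStarProjection_abs_eq
  refine ⟨P, nonneg_iff_posSemidef.mp hP.nonneg, nonneg_iff_posSemidef.mp hP.one_sub.nonneg, ?_⟩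
  rw [habs]
  simp only [sub_mul, mul_sub, one_mul, trace_sub]
  ring

namespace PosSemidef

lemma trace_abs_sub_le (hA : A.PosSemidef) (hB : B.PosSemidef) :
    (CFC.abs (A - B)).trace ≤ A.trace + B.trace := by
  obtain ⟨P, hP, hQ, htr⟩ := hA.1.exists_trace_abs_sub_add_eq hB.1
  rw [← htr, le_add_iff_nonneg_right]
  exact mul_nonneg zero_le_two (add_nonneg (hP.trace_mul_nonneg hB) (hQ.trace_mul_nonneg hA))

lemma trace_abs_sub_eq_iff (hA : A.PosSemidef) (hB : B.PosSemidef) :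
    (CFC.abs (A - B)).trace = A.trace + B.trace ↔ A * B = 0 := by
  constructor
  · intro h
    obtain ⟨P, hP, hQ, htr⟩ := hA.1.exists_trace_abs_sub_add_eq hB.1
    rw [h, add_eq_left, mul_eq_zero, add_eq_zero_iff_of_nonneg (hP.trace_mul_nonneg hB)
      (hQ.trace_mul_nonneg hA)] at htr
    obtain ⟨hPB, hQA⟩ := htr.resolve_left two_ne_zero
    rw [hP.trace_mul_eq_zero_iff hB] at hPB
    rw [trace_mul_comm, hA.trace_mul_eq_zero_iff hQ] at hQA
    calc A * B = A * (1 - P) * B + A * (P * B) := by noncomm_ring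
      _ = 0 := by rw [hQA, hPB, zero_mul, mul_zero, add_zero]
  · intro h
    obtain ⟨hpos, hneg⟩ := CFC.posPart_negPart_unique rfl h hA.nonneg hB.nonneg
    rw [← CFC.posPart_add_negPart (A - B) (hA.1.sub hB.1), hpos, hneg, trace_add]

end PosSemidef

end Matrix

namespace QSVQDH

variable {d : ℕ} {ρ σ : Matrix (Fin d) (Fin d) ℂ}

lemma trNorm_eq_re_trace_abs (A : Matrix (Fin d) (Fin d) ℂ) :
    trNorm A = (CFC.abs A).trace.re := by
  have hAA := posSemidef_conjTranspose_mul_self A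
  rw [CFC.abs, star_eq_conjTranspose, CFC.sqrt_eq_cfc, cfc_nnreal_eq_real _ _ hAA.nonneg,
    hAA.1.cfc_eq, show (fun x : ℝ => (NNReal.sqrt x.toNNReal : ℝ)) = (√·) from
      funext fun x => (Real.sqrt.eq_1 x).symm]
  rfl

lemma IsDensity.trace_abs_sub_le_two (hρ : IsDensity ρ) (hσ : IsDensity σ) :
    (CFC.abs (ρ - σ)).trace ≤ 2 := by
  simpa [hρ.2, hσ.2, one_add_one_eq_two] using hρ.1.trace_abs_sub_le hσ.1

lemma IsDensity.trNorm_sub_le_two (hρ : IsDensity ρ) (hσ : IsDensity σ) :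
    trNorm (ρ - σ) ≤ 2 := by
  simpa [trNorm_eq_re_trace_abs] using (Complex.le_def.mp (hρ.trace_abs_sub_le_two hσ)).1

lemma IsDensity.trNorm_sub_eq_two_iff (hρ : IsDensity ρ) (hσ : IsDensity σ) :
    trNorm (ρ - σ) = 2 ↔ (ρ * σ).trace = 0 := by
  have him : (CFC.abs (ρ - σ)).trace.im = 0 := by
    simpa using (Complex.le_def.mp (hρ.trace_abs_sub_le_two hσ)).2
  rw [hρ.1.trace_mul_eq_zero_iff hσ.1, ← hρ.1.trace_abs_sub_eq_iff hσ.1, hρ.2, hσ.2,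
    one_add_one_eq_two, trNorm_eq_re_trace_abs, Complex.ext_iff]
  simp [him]

theorem trace_orthogonal_iff_and_mu_one_general (Mset : Set (Matrix (Fin d) (Fin d) ℂ))
    (ρ : Matrix (Fin d) (Fin d) ℂ) (hρ : IsDensity ρ) :
    (∀ σ : Matrix (Fin d) (Fin d) ℂ, IsDensity σ →
        ((ρ * σ).trace = 0 ↔ trNorm (ρ - σ) = 2)) ∧
      mu Mset ρ 1 =
        (1 / 2) * sInf ((fun σ => Mnorm Mset (ρ - σ)) ''
          {σ | IsDensity σ ∧ (ρ * σ).trace = 0}) := by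
  have horth (σ : Matrix (Fin d) (Fin d) ℂ) (hσ : IsDensity σ) :
      (ρ * σ).trace = 0 ↔ trNorm (ρ - σ) = 2 :=
    (hρ.trNorm_sub_eq_two_iff hσ).symm
  refine ⟨horth, ?_⟩
  have hset : {σ | IsDensity σ ∧ 2 * 1 ≤ trNorm (ρ - σ)} =
      {σ | IsDensity σ ∧ (ρ * σ).trace = 0} := by
    ext σ
    refine and_congr_right fun hσ => ?_
    rw [horth σ hσ, mul_one]
    exact ⟨fun h => le_antisymm (hρ.trNorm_sub_le_two hσ) h, ge_of_eq⟩
  rw [mu, hset]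
  norm_num

/-- tr(ρσ) = 0 iff ‖ρ − σ‖₁ = 2, and consequently
μ_{ρ,M}(1) = (1/2) min{‖ρ − σ‖_M : σ density, tr(ρσ) = 0}. -/
theorem trace_orthogonal_iff_and_mu_one (Mset : Set (Matrix (Fin d) (Fin d) ℂ))
    (hM : IsMClass Mset) (ρ : Matrix (Fin d) (Fin d) ℂ) (hρ : IsDensity ρ)
    (hex : ∃ σ, IsDensity σ ∧ (ρ * σ).trace = 0) :
    (∀ σ : Matrix (Fin d) (Fin d) ℂ, IsDensity σ →
        ((ρ * σ).trace = 0 ↔ trNorm (ρ - σ) = 2)) ∧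
      mu Mset ρ 1 =
        (1 / 2) * sInf ((fun σ => Mnorm Mset (ρ - σ)) ''
          {σ | IsDensity σ ∧ (ρ * σ).trace = 0}) :=
  trace_orthogonal_iff_and_mu_one_general Mset ρ hρ

end QSVQDH
end

section
/- Let V be a subspace, 0 ≤ Ω ≤ I, and s, ε ∈ (0,1). If min over density operators ρ with range(ρ) ⊆ V and σ with tr(σ Π_V) ≤ 1 − ε of tr(Ω(ρ − σ)) exceeds ε·s, then the off-diagonal block Δ₁ = (I − Π_V) Ω Π_V satisfies ‖Δ₁‖_∞ < (1/2)·√(ε/(1−ε)). -/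
/-
For unit vectors `ψ ∈ V` and `φ ∈ V⊥`, compare `|ψ⟩⟨ψ|` with the pure state of
`χ = √(1-ε) ψ + √ε e^{-iθ} φ`, whose weight on `V` is exactly `1 - ε`. With `θ = arg ⟪Ω ψ, φ⟫`
the cross term of `⟪χ, Ω χ⟫` is `2 √(ε(1-ε)) ‖⟪Ω ψ, φ⟫‖`, so, as `0 ≤ Ω ≤ 1`, the hypothesis gives
`2 √(ε(1-ε)) ‖⟪Ω ψ, φ⟫‖ < ε (1 - s)`. The norm of `(1 - Π_V) Ω Π_V` is the supremum of these
matrix coefficients, hence at most `(1 - s)/2 · √(ε/(1-ε)) < 1/2 · √(ε/(1-ε))`.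
-/

open Matrix
open scoped ComplexOrder

namespace QSVQDH

variable {d : ℕ}

open scoped InnerProductSpace ComplexConjugate

section
variable {E : Type*} [NormedAddCommGroup E] [InnerProductSpace ℂ E]

theorem re_inner_smul_add_smul_apply {T : E →L[ℂ] E} (hT : (T : E →ₗ[ℂ] E).IsSymmetric)
    (a : ℝ) (b : ℂ) (x y : E) :
    (⟪(a : ℂ) • x + b • y, T ((a : ℂ) • x + b • y)⟫_ℂ).re =
      a ^ 2 * (⟪x, T x⟫_ℂ).re + 2 * a * (b * ⟪T x, y⟫_ℂ).re + ‖b‖ ^ 2 * (⟪y, T y⟫_ℂ).re := by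
  have hyx : ⟪y, T x⟫_ℂ = conj ⟪T x, y⟫_ℂ := by rw [inner_conj_symm]
  have hbb : b * (conj b * ⟪y, T y⟫_ℂ) = (‖b‖ ^ 2 : ℝ) * ⟪y, T y⟫_ℂ := by
    rw [← mul_assoc, Complex.mul_conj', Complex.ofReal_pow]
  simp only [map_add, map_smul, inner_add_left, inner_add_right, inner_smul_left,
    inner_smul_right, ← hT.apply_clm x y, hyx, Complex.conj_ofReal, mul_add, hbb]
  rw [mul_left_comm b, ← map_mul]
  simp only [Complex.add_re, Complex.re_ofReal_mul, Complex.conj_re]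
  ring

open Complex in
theorem exists_norm_eq_mul_eq_mul_norm (z : ℂ) {r : ℝ} (hr : 0 ≤ r) :
    ∃ b : ℂ, ‖b‖ = r ∧ b * z = (r * ‖z‖ : ℝ) := by
  refine ⟨r * exp (-(arg z * I)), by simp [norm_exp, hr], ?_⟩
  conv_lhs => arg 2; rw [← norm_mul_exp_arg_mul_I z]
  rw [show r * exp (-(arg z * I)) * (‖z‖ * exp (arg z * I)) =
    r * ‖z‖ * (exp (-(arg z * I)) * exp (arg z * I)) by ring, ← exp_add, neg_add_cancel, exp_zero,
    mul_one, ofReal_mul]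

theorem lt_mul_sqrt_div_of_two_mul_sqrt_mul_lt {s ε t : ℝ} (hε : ε ∈ Set.Ioo 0 1)
    (h : 2 * √(1 - ε) * √ε * t < ε * (1 - s)) : t < (1 - s) / 2 * √(ε / (1 - ε)) := by
  rw [Real.sqrt_div hε.1.le, mul_div_assoc', lt_div_iff₀ (Real.sqrt_pos.2 (by linarith [hε.2]))]
  refine lt_of_mul_lt_mul_left ?_ (by positivity : 0 ≤ 2 * √ε)
  calc 2 * √ε * (t * √(1 - ε)) = 2 * √(1 - ε) * √ε * t := by ring
    _ < ε * (1 - s) := h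
    _ = 2 * √ε * ((1 - s) / 2 * √ε) := by linear_combination (s - 1) * Real.mul_self_sqrt hε.1.le

/-- The hypothesis of the theorem, restricted to pure states `ρ = |ψ⟩⟨ψ|` and `σ = |χ⟩⟨χ|`. -/
def PureGap (Ω P : E →L[ℂ] E) (s ε : ℝ) : Prop :=
  ∀ ψ χ : E, ‖ψ‖ = 1 → P ψ = ψ → ‖χ‖ = 1 → (⟪χ, P χ⟫_ℂ).re ≤ 1 - ε →
    ε * s < (⟪ψ, Ω ψ⟫_ℂ).re - (⟪χ, Ω χ⟫_ℂ).re

theorem norm_inner_lt_of_pureGap {Ω P : E →L[ℂ] E} (hΩ : Ω.IsPositive)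
    (hΩ1 : (1 - Ω).IsPositive) (hP : (P : E →ₗ[ℂ] E).IsSymmetric) {s ε : ℝ}
    (hε : ε ∈ Set.Ioo 0 1) (hgap : PureGap Ω P s ε)
    {ψ φ : E} (hψ : ‖ψ‖ = 1) (hφ : ‖φ‖ = 1) (hPψ : P ψ = ψ) (hPφ : P φ = 0) :
    ‖⟪Ω ψ, φ⟫_ℂ‖ < (1 - s) / 2 * √(ε / (1 - ε)) := by
  obtain ⟨hε0, hε1⟩ := hε
  set z := ⟪Ω ψ, φ⟫_ℂ
  set a := √(1 - ε)
  have ha : a ^ 2 = 1 - ε := Real.sq_sqrt (by linarith)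
  obtain ⟨b, hb, hbz⟩ := exists_norm_eq_mul_eq_mul_norm z (Real.sqrt_nonneg ε)
  have hb2 : ‖b‖ ^ 2 = ε := by rw [hb, Real.sq_sqrt hε0.le]
  have hψφ : ⟪ψ, φ⟫_ℂ = 0 := by rw [← hPψ, hP.apply_clm, hPφ, inner_zero_right]
  set χ := (a : ℂ) • ψ + b • φ
  have hχ : ‖χ‖ = 1 := by
    have hχχ := re_inner_smul_add_smul_apply (T := 1) (fun _ _ => rfl) a b ψ φ
    simp only [one_apply_eq_self, hψφ, mul_zero, Complex.zero_re, ha, hb2] at hχχ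
    rw [← pow_eq_one_iff_of_nonneg (norm_nonneg _) two_ne_zero, @norm_sq_eq_re_inner ℂ]
    refine hχχ.trans ?_
    simp [inner_self_eq_norm_sq_to_K, hψ, hφ]
  have hPχ : (⟪χ, P χ⟫_ℂ).re = 1 - ε := by
    rw [re_inner_smul_add_smul_apply hP, hPψ, hPφ, hψφ, inner_zero_right,
      inner_self_eq_norm_sq_to_K, hψ]
    simp [ha]
  have hΩχ : (⟪χ, Ω χ⟫_ℂ).re =
      (1 - ε) * (⟪ψ, Ω ψ⟫_ℂ).re + 2 * a * √ε * ‖z‖ + ε * (⟪φ, Ω φ⟫_ℂ).re := by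
    rw [re_inner_smul_add_smul_apply hΩ.isSymmetric, ha, hbz, hb2, Complex.ofReal_re]
    ring
  have hΩψ : (⟪ψ, Ω ψ⟫_ℂ).re ≤ 1 := by
    simpa [inner_sub_right, hψ] using hΩ1.re_inner_nonneg_right ψ
  have hΩφ : 0 ≤ (⟪φ, Ω φ⟫_ℂ).re := hΩ.re_inner_nonneg_right φ
  refine lt_mul_sqrt_div_of_two_mul_sqrt_mul_lt ⟨hε0, hε1⟩ ?_
  have := hgap ψ χ hψ hPψ hχ hPχ.le
  rw [hΩχ] at this
  nlinarith [mul_nonneg hε0.le hΩφ, mul_le_mul_of_nonneg_left hΩψ hε0.le]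

theorem norm_inner_le_of_pureGap {Ω P : E →L[ℂ] E} (hΩ : Ω.IsPositive) (hΩ1 : (1 - Ω).IsPositive)
    (hP : (P : E →ₗ[ℂ] E).IsSymmetric) {s ε : ℝ} (hε : ε ∈ Set.Ioo 0 1) (hgap : PureGap Ω P s ε)
    {w u : E} (hw : P w = w) (hu : P u = 0) :
    ‖⟪Ω w, u⟫_ℂ‖ ≤ (1 - s) / 2 * √(ε / (1 - ε)) * ‖w‖ * ‖u‖ := by
  rcases eq_or_ne w 0 with rfl | hw0
  · simp
  rcases eq_or_ne u 0 with rfl | hu0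
  · simp
  have := norm_inner_lt_of_pureGap hΩ hΩ1 hP hε hgap (norm_smul_inv_norm hw0)
    (norm_smul_inv_norm hu0) (by rw [map_smul, hw]) (by rw [map_smul, hu, smul_zero])
  rw [map_smul, inner_smul_left, inner_smul_right, norm_mul, norm_mul, Complex.norm_conj,
    norm_inv, norm_inv, RCLike.norm_coe_norm, RCLike.norm_coe_norm, ← mul_assoc, ← mul_inv,
    inv_mul_lt_iff₀ (by positivity)] at this
  linarith

theorem norm_one_sub_mul_mul_le [CompleteSpace E] {P Ω : E →L[ℂ] E} (hP : IsStarProjection P)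
    {C : ℝ} (hC : 0 ≤ C) (h : ∀ w u, P w = w → P u = 0 → ‖⟪Ω w, u⟫_ℂ‖ ≤ C * ‖w‖ * ‖u‖) :
    ‖(1 - P) * Ω * P‖ ≤ C := by
  refine ContinuousLinearMap.opNorm_le_of_re_inner_le hC fun x y hx hy => ?_
  have hPx : ‖P x‖ ≤ 1 := by simpa [hx] using P.le_of_opNorm_le (IsStarProjection.norm_le _ hP) x
  have hQy : ‖(1 - P) y‖ ≤ 1 := by
    simpa [hy] using (1 - P).le_of_opNorm_le (IsStarProjection.norm_le _ hP.one_sub) y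
  calc RCLike.re ⟪((1 - P) * Ω * P) x, y⟫_ℂ = (⟪Ω (P x), (1 - P) y⟫_ℂ).re := by
        rw [mul_apply_eq_comp, mul_apply_eq_comp,
          hP.one_sub.isSelfAdjoint.isSymmetric.apply_clm]
        rfl
    _ ≤ ‖⟪Ω (P x), (1 - P) y⟫_ℂ‖ := Complex.re_le_norm _
    _ ≤ C * ‖P x‖ * ‖(1 - P) y‖ := h _ _ (by rw [← mul_apply_eq_comp, hP.isIdempotentElem.eq])
        (by rw [← mul_apply_eq_comp, hP.mul_one_sub_self, _root_.zero_apply])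
    _ ≤ C * 1 * 1 := by gcongr
    _ = C := by ring

end

section Matrices

variable {n : Type*} [Fintype n] [DecidableEq n]

theorem isPositive_toEuclideanCLM {A : Matrix n n ℂ} (hA : A.PosSemidef) :
    (toEuclideanCLM (n := n) (𝕜 := ℂ) A).IsPositive := by
  rw [← ContinuousLinearMap.isPositive_toLinearMap_iff, coe_toEuclideanCLM_eq_toEuclideanLin]
  exact Matrix.isPositive_toEuclideanLin_iff.2 hA

theorem trace_mul_vecMulVec_star (M : Matrix n n ℂ) (v : EuclideanSpace ℂ n) :
    (M * vecMulVec v.ofLp (star v.ofLp)).trace = ⟪v, toEuclideanCLM (𝕜 := ℂ) M v⟫_ℂ := by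
  rw [mul_vecMulVec, trace_vecMulVec]
  rfl

theorem isDensity_vecMulVec_star {v : EuclideanSpace ℂ (Fin d)} (hv : ‖v‖ = 1) :
    IsDensity (vecMulVec v.ofLp (star v.ofLp)) := by
  refine ⟨posSemidef_vecMulVec_self_star _, ?_⟩
  simpa [hv, inner_self_eq_norm_sq_to_K] using trace_mul_vecMulVec_star 1 v

theorem pureGap_of_forall_density {P Ω : Matrix (Fin d) (Fin d) ℂ} {s ε : ℝ}
    (hmin : ∀ ρ σ : Matrix (Fin d) (Fin d) ℂ, IsDensity ρ → P * ρ = ρ →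
      IsDensity σ → (σ * P).trace.re ≤ 1 - ε → ε * s < (Ω * (ρ - σ)).trace.re) :
    PureGap (toEuclideanCLM (𝕜 := ℂ) Ω) (toEuclideanCLM (𝕜 := ℂ) P) s ε := by
  intro ψ χ hψ hPψ hχ hPχ
  have hρ : P * vecMulVec ψ.ofLp (star ψ.ofLp) = vecMulVec ψ.ofLp (star ψ.ofLp) := by
    rw [mul_vecMulVec, ← ofLp_toEuclideanCLM (𝕜 := ℂ), hPψ]
  have := hmin _ _ (isDensity_vecMulVec_star hψ) hρ (isDensity_vecMulVec_star hχ)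
    (by rwa [trace_mul_comm, trace_mul_vecMulVec_star])
  rwa [Matrix.mul_sub, trace_sub, trace_mul_vecMulVec_star, trace_mul_vecMulVec_star,
    Complex.sub_re] at this

end Matrices

theorem deviation_lemma_offdiag_general (P Ω : Matrix (Fin d) (Fin d) ℂ)
    (hP : P.IsHermitian) (hP2 : P * P = P)
    (hΩ : IsPOVMElem Ω) (s ε : ℝ) (hs : s ∈ Set.Ioo (0 : ℝ) 1) (hε : ε ∈ Set.Ioo (0 : ℝ) 1)
    (hmin : ∀ ρ σ : Matrix (Fin d) (Fin d) ℂ, IsDensity ρ → P * ρ = ρ →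
      IsDensity σ → (σ * P).trace.re ≤ 1 - ε → ε * s < (Ω * (ρ - σ)).trace.re) :
    opNorm ((1 - P) * Ω * P) < (1 / 2) * Real.sqrt (ε / (1 - ε)) := by
  set P' := toEuclideanCLM (n := Fin d) (𝕜 := ℂ) P
  set Ω' := toEuclideanCLM (n := Fin d) (𝕜 := ℂ) Ω
  have hP' : IsStarProjection P' := IsStarProjection.map ⟨hP2, hP⟩ _
  have hΩ' : Ω'.IsPositive := isPositive_toEuclideanCLM hΩ.1
  have hΩ'1 : (1 - Ω').IsPositive := by
    simpa [Ω', map_sub, map_one] using isPositive_toEuclideanCLM hΩ.2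
  have hC : 0 ≤ (1 - s) / 2 * √(ε / (1 - ε)) := mul_nonneg (by linarith [hs.2]) (Real.sqrt_nonneg _)
  calc opNorm ((1 - P) * Ω * P) = ‖(1 - P') * Ω' * P'‖ := by
        simp only [opNorm, P', Ω', map_mul, map_sub, map_one]
    _ ≤ (1 - s) / 2 * √(ε / (1 - ε)) := norm_one_sub_mul_mul_le hP' hC fun w u hw hu =>
        norm_inner_le_of_pureGap hΩ' hΩ'1 hP'.isSelfAdjoint.isSymmetric hε
          (pureGap_of_forall_density hmin) hw hu
    _ < 1 / 2 * √(ε / (1 - ε)) := by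
        gcongr
        · exact Real.sqrt_pos.2 (div_pos hε.1 (by linarith [hε.2]))
        · linarith [hs.1]

/-- second part of Lemma 1: the off-diagonal block
Δ₁ = (I − Π_V) Ω Π_V satisfies ‖Δ₁‖_∞ < (1/2)√(ε/(1−ε)). -/
theorem deviation_lemma_offdiag (P Ω : Matrix (Fin d) (Fin d) ℂ)
    (hP : P.IsHermitian) (hP2 : P * P = P) (hP0 : P ≠ 0) (hP1 : P ≠ 1)
    (hΩ : IsPOVMElem Ω) (s ε : ℝ) (hs : s ∈ Set.Ioo (0 : ℝ) 1) (hε : ε ∈ Set.Ioo (0 : ℝ) 1)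
    (hmin : ∀ ρ σ : Matrix (Fin d) (Fin d) ℂ, IsDensity ρ → P * ρ = ρ →
      IsDensity σ → (σ * P).trace.re ≤ 1 - ε → ε * s < (Ω * (ρ - σ)).trace.re) :
    opNorm ((1 - P) * Ω * P) < (1 / 2) * Real.sqrt (ε / (1 - ε)) :=
  deviation_lemma_offdiag_general P Ω hP hP2 hΩ s ε hs hε hmin

end QSVQDH
end
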